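/- Let V be a real Hilbert space, a a continuous symmetric bilinear form with a(v,v) ≥ c‖v‖_{L}² for a seminorm/weaker norm ‖·‖_L satisfying ‖v‖_L ≤ C₀‖v‖, α > 0, p ≥ 2. Suppose u₁, u₂ ∈ V solve a(uᵢ,w) + α‖uᵢ‖_L^p (uᵢ,w)_L = ℓᵢ(w) for all w ∈ V, where ℓᵢ(w) = (θᵢ, w)_L with θᵢ in the L-inner-product space. Then c‖u₁ − u₂‖_L ≤ ‖θ₁ − θ₂‖_L, i.e. the control-to-state map is Lipschitz with constant 1/c in the L-norm. -/

import Mathlib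

open RealInnerProductSpace

lemma mono_aux {H : Type*} [NormedAddCommGroup H] [InnerProductSpace ℝ H]
    (p : ℝ) (hp : 0 ≤ p) (x y : H) :
    0 ≤ ‖x‖ ^ p * ⟪x, x - y⟫ - ‖y‖ ^ p * ⟪y, x - y⟫ := by
  rw [inner_sub_right, inner_sub_right, real_inner_self_eq_norm_sq,
    real_inner_self_eq_norm_sq, real_inner_comm y x]
  set A := ‖x‖ with hA
  set B := ‖y‖ with hB
  have hA0 : 0 ≤ A := norm_nonneg x
  have hB0 : 0 ≤ B := norm_nonneg y
  have hI : ⟪x, y⟫ ≤ A * B := real_inner_le_norm x y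
  have hAp : (0:ℝ) ≤ A ^ p := Real.rpow_nonneg hA0 p
  have hBp : (0:ℝ) ≤ B ^ p := Real.rpow_nonneg hB0 p
  have hI' : ⟪y, x⟫ ≤ A * B := by rw [real_inner_comm]; exact hI
  have key : 0 ≤ (A - B) * (A ^ p * A - B ^ p * B) := by
    rcases le_total B A with h | h
    · exact mul_nonneg (by linarith)
        (by nlinarith [Real.rpow_le_rpow hB0 h hp])
    · have h2 := Real.rpow_le_rpow hA0 h hp
      have h3 : A ^ p * A ≤ B ^ p * B :=
        le_trans (mul_le_mul_of_nonneg_right h2 hA0) (mul_le_mul_of_nonneg_left h hBp)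
      nlinarith [mul_nonneg (sub_nonneg.2 h) (sub_nonneg.2 h3)]
  nlinarith [mul_nonneg hAp (sub_nonneg.mpr hI'), mul_nonneg hBp (sub_nonneg.mpr hI')]

/-- abstract Lipschitz continuity of the control-to-state map in the weaker
`L`-norm induced by a continuous embedding `E : V → H`: if `a(v,v) ≥ c ‖E v‖²` and
`uᵢ` solves `a(uᵢ,w) + α ‖E uᵢ‖^p ⟪E uᵢ, E w⟫ = ⟪θᵢ, E w⟫`, then
`c ‖E u₁ − E u₂‖ ≤ ‖θ₁ − θ₂‖`. -/
theorem control_to_state_lipschitz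
    {V H : Type*} [NormedAddCommGroup V] [InnerProductSpace ℝ V] [CompleteSpace V]
    [NormedAddCommGroup H] [InnerProductSpace ℝ H] [CompleteSpace H]
    (E : V →L[ℝ] H) (C₀ : ℝ) (hE : ∀ v : V, ‖E v‖ ≤ C₀ * ‖v‖)
    (a : V → V → ℝ)
    (ha_add : ∀ x y z : V, a (x + y) z = a x z + a y z)
    (ha_smul : ∀ (c : ℝ) (x y : V), a (c • x) y = c * a x y)
    (ha_symm : ∀ x y : V, a x y = a y x)
    (ha_cont : ∃ C : ℝ, ∀ x y : V, |a x y| ≤ C * ‖x‖ * ‖y‖)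
    (c : ℝ) (hc : 0 < c)
    (ha_coer : ∀ v : V, c * ‖E v‖ ^ 2 ≤ a v v)
    (p α : ℝ) (hp : 2 ≤ p) (hα : 0 < α)
    (θ₁ θ₂ : H) (u₁ u₂ : V)
    (h₁ : ∀ w : V, a u₁ w + α * ‖E u₁‖ ^ p * ⟪E u₁, E w⟫ = ⟪θ₁, E w⟫)
    (h₂ : ∀ w : V, a u₂ w + α * ‖E u₂‖ ^ p * ⟪E u₂, E w⟫ = ⟪θ₂, E w⟫) :
    c * ‖E u₁ - E u₂‖ ≤ ‖θ₁ - θ₂‖ := by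
  set w : V := u₁ - u₂ with hw
  have hEw : E w = E u₁ - E u₂ := map_sub E u₁ u₂
  have hsub : ∀ x y z : V, a (x - y) z = a x z - a y z := by
    intro x y z
    have : a (x + (-1 : ℝ) • y) z = a x z + (-1) * a y z := by
      rw [ha_add, ha_smul]
    simpa [sub_eq_add_neg] using this
  have hmono : 0 ≤ ‖E u₁‖ ^ p * ⟪E u₁, E w⟫ - ‖E u₂‖ ^ p * ⟪E u₂, E w⟫ := by
    rw [hEw]; exact mono_aux p (by linarith) (E u₁) (E u₂)
  have heq : a w w + α * (‖E u₁‖ ^ p * ⟪E u₁, E w⟫ - ‖E u₂‖ ^ p * ⟪E u₂, E w⟫)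
      = ⟪θ₁ - θ₂, E w⟫ := by
    have e1 := h₁ w
    have e2 := h₂ w
    rw [hsub, inner_sub_left]
    ring_nf
    ring_nf at e1 e2
    linarith
  have hchain : c * ‖E w‖ ^ 2 ≤ ‖θ₁ - θ₂‖ * ‖E w‖ := by
    calc c * ‖E w‖ ^ 2 ≤ a w w := ha_coer w
      _ ≤ a w w + α * (‖E u₁‖ ^ p * ⟪E u₁, E w⟫ - ‖E u₂‖ ^ p * ⟪E u₂, E w⟫) := by
          nlinarith
      _ = ⟪θ₁ - θ₂, E w⟫ := heq
      _ ≤ ‖θ₁ - θ₂‖ * ‖E w‖ := real_inner_le_norm _ _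
  rw [← hEw]
  rcases eq_or_lt_of_le (norm_nonneg (E w)) with h0 | h0
  · rw [← h0, mul_zero]; exact norm_nonneg _
  · rw [pow_two, ← mul_assoc] at hchain
    exact (mul_le_mul_iff_of_pos_right h0).mp hchain
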